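/- Let X1, X2, X3 be i.i.d. random elements of a metric space (X, d) and let x ∈ X satisfy D_{O3}(x) = 1, i.e., E[h(x, X1, X2, X3)] = 0. Then with probability one at least one of the events L(X1, x, X2), L(X2, x, X3), L(X3, x, X1) occurs, where L(a, b, c) denotes d(a, c) = d(a, b) + d(b, c). -/

import Mathlib

open MeasureTheory ProbabilityTheory

/-- The `3 × 3` matrix `B3(x, x1, x2, x3)` with `(k,ℓ)`-entry
`(1/2)(d(x,x_k)² + d(x,x_ℓ)² - d(x_k,x_ℓ)²)`. -/
noncomputable def B3 {X : Type*} [MetricSpace X] (x x1 x2 x3 : X) :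
    Matrix (Fin 3) (Fin 3) ℝ :=
  Matrix.of fun k ℓ =>
    (1 / 2) * (dist x (![x1, x2, x3] k) ^ 2 + dist x (![x1, x2, x3] ℓ) ^ 2
      - dist (![x1, x2, x3] k) (![x1, x2, x3] ℓ) ^ 2)

/-- The metric Oja depth kernel `h(x, x1, x2, x3)`. -/
noncomputable def ojaKernel {X : Type*} [MetricSpace X] (x x1 x2 x3 : X) : ℝ :=
  Real.sqrt ((B3 x x1 x2 x3).det +
    4 * dist x x1 ^ 2 * dist x x2 ^ 2 * dist x x3 ^ 2)

/-- `MBetween a b c` : `b` lies between `a` and `c`. -/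
def MBetween {X : Type*} [MetricSpace X] (a b c : X) : Prop :=
  dist a c = dist a b + dist b c

/-!
With `a, b, c` the distances from `x` to `x1, x2, x3` and `α, β, γ` the polarization products
`⟨x1 - x, x2 - x⟩, ⟨x2 - x, x3 - x⟩, ⟨x3 - x, x1 - x⟩`, expanding the determinant gives
`det B3 + 4a²b²c² = 5a²b²c² - a²β² - b²γ² - c²α² + 2αβγ`.
The triangle inequality gives `|α| ≤ ab`, and `x` not lying between `x1` and `x2` makes
`-ab < α` strict; likewise for `β, γ`. Each squared term is then at most `a²b²c²`, and
`a²b²c² + αβγ > 0`, so the radicand of `h` is positive whenever none of the three betweenness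
relations holds. As `h ≥ 0`, `E[h] = 0` forces `h = 0` almost surely.
-/

/-- The four sign patterns with `s t u = 1` of `(A + s α)(B + t β)(C + u γ)` sum to
`4 (A B C + α β γ)`. -/
lemma mul_mul_add_mul_mul_pos {A B C α β γ : ℝ}
    (hα : -A < α) (hα' : α ≤ A) (hβ : -B < β) (hβ' : β ≤ B) (hγ : -C < γ) (hγ' : γ ≤ C) :
    0 < A * B * C + α * β * γ := by
  have hαA : 0 < A + α := by linarith
  have hβB : 0 < B + β := by linarith
  have hγC : 0 < C + γ := by linarith
  nlinarith [mul_pos (mul_pos hαA hβB) hγC,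
    mul_nonneg (mul_nonneg hαA.le (sub_nonneg.mpr hβ')) (sub_nonneg.mpr hγ'),
    mul_nonneg (mul_nonneg (sub_nonneg.mpr hα') hβB.le) (sub_nonneg.mpr hγ'),
    mul_nonneg (mul_nonneg (sub_nonneg.mpr hα') (sub_nonneg.mpr hβ')) hγC.le]

section

variable {X : Type*} [MetricSpace X]

/-- The inner product `⟨y - x, z - x⟩` as it is recovered from distances by polarization. -/
noncomputable def distInner (x y z : X) : ℝ :=
  (1 / 2) * (dist x y ^ 2 + dist x z ^ 2 - dist y z ^ 2)

lemma distInner_le_mul_dist (x y z : X) :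
    distInner x y z ≤ dist x y * dist x z := by
  have h := abs_le.mp (abs_dist_sub_le y z x)
  rw [dist_comm y x, dist_comm z x] at h
  unfold distInner
  nlinarith [dist_nonneg (x := y) (y := z)]

lemma neg_mul_dist_lt_distInner {x y z : X}
    (h : ¬ MBetween y x z) : -(dist x y * dist x z) < distInner x y z := by
  have hlt : dist y z < dist x y + dist x z := by
    simpa only [dist_comm y x] using (dist_triangle y x z).lt_of_ne h
  unfold distInner
  nlinarith [dist_nonneg (x := y) (y := z)]

lemma det_B3 (x x1 x2 x3 : X) :
    (B3 x x1 x2 x3).det =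
      dist x x1 ^ 2 * dist x x2 ^ 2 * dist x x3 ^ 2
        - dist x x1 ^ 2 * distInner x x2 x3 ^ 2 - dist x x2 ^ 2 * distInner x x3 x1 ^ 2
        - dist x x3 ^ 2 * distInner x x1 x2 ^ 2
        + 2 * distInner x x1 x2 * distInner x x2 x3 * distInner x x3 x1 := by
  simp only [B3, distInner, Matrix.det_fin_three, Matrix.of_apply, Matrix.cons_val_zero,
    Matrix.cons_val_one, Matrix.cons_val_two, Matrix.head_cons, Matrix.tail_cons, dist_self]
  simp only [dist_comm x2 x1, dist_comm x3 x2, dist_comm x1 x3]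
  ring

lemma det_B3_add_pos {x x1 x2 x3 : X}
    (h12 : ¬ MBetween x1 x x2) (h23 : ¬ MBetween x2 x x3) (h31 : ¬ MBetween x3 x x1) :
    0 < (B3 x x1 x2 x3).det + 4 * dist x x1 ^ 2 * dist x x2 ^ 2 * dist x x3 ^ 2 := by
  set a := dist x x1
  set b := dist x x2
  set c := dist x x3
  have hα := neg_mul_dist_lt_distInner h12
  have hβ := neg_mul_dist_lt_distInner h23
  have hγ := neg_mul_dist_lt_distInner h31
  have hα' := distInner_le_mul_dist x x1 x2
  have hβ' := distInner_le_mul_dist x x2 x3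
  have hγ' := distInner_le_mul_dist x x3 x1
  have hprod := mul_mul_add_mul_mul_pos hα hα' hβ hβ' hγ hγ'
  have hsqα : distInner x x1 x2 ^ 2 ≤ (a * b) ^ 2 := sq_le_sq' (by linarith) hα'
  have hsqβ : distInner x x2 x3 ^ 2 ≤ (b * c) ^ 2 := sq_le_sq' (by linarith) hβ'
  have hsqγ : distInner x x3 x1 ^ 2 ≤ (c * a) ^ 2 := sq_le_sq' (by linarith) hγ'
  rw [det_B3]
  nlinarith [mul_le_mul_of_nonneg_left hsqα (sq_nonneg c),
    mul_le_mul_of_nonneg_left hsqβ (sq_nonneg a), mul_le_mul_of_nonneg_left hsqγ (sq_nonneg b)]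

lemma mBetween_or_of_ojaKernel_eq_zero {x x1 x2 x3 : X}
    (h : ojaKernel x x1 x2 x3 = 0) :
    MBetween x1 x x2 ∨ MBetween x2 x x3 ∨ MBetween x3 x x1 := by
  by_contra! hnot
  obtain ⟨h12, h23, h31⟩ := hnot
  exact (Real.sqrt_pos.mpr (det_B3_add_pos h12 h23 h31)).ne' h

end

theorem max_depth_implies_betweenness_as_general
    {Ω : Type*} [MeasurableSpace Ω] {M : Type*} [MetricSpace M]
    (μ : Measure Ω)
    (Xs : Fin 3 → Ω → M)
    (x : M)
    (hint : Integrable (fun ω => ojaKernel x (Xs 0 ω) (Xs 1 ω) (Xs 2 ω)) μ)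
    (hzero : ∫ ω, ojaKernel x (Xs 0 ω) (Xs 1 ω) (Xs 2 ω) ∂μ = 0) :
    ∀ᵐ ω ∂μ, MBetween (Xs 0 ω) x (Xs 1 ω) ∨ MBetween (Xs 1 ω) x (Xs 2 ω) ∨
      MBetween (Xs 2 ω) x (Xs 0 ω) := by
  have hnonneg : 0 ≤ᵐ[μ] fun ω => ojaKernel x (Xs 0 ω) (Xs 1 ω) (Xs 2 ω) :=
    Filter.Eventually.of_forall fun _ => Real.sqrt_nonneg _
  filter_upwards [(integral_eq_zero_iff_of_nonneg_ae hnonneg hint).mp hzero] with ω hω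
  exact mBetween_or_of_ojaKernel_eq_zero hω

theorem max_depth_implies_betweenness_as
    {Ω : Type*} [MeasurableSpace Ω] {M : Type*} [MetricSpace M]
    [MeasurableSpace M] [BorelSpace M]
    (μ : Measure Ω) [IsProbabilityMeasure μ]
    (Xs : Fin 3 → Ω → M) (hmeas : ∀ i, Measurable (Xs i))
    (hindep : iIndepFun Xs μ)
    (hident : ∀ i j, IdentDistrib (Xs i) (Xs j) μ μ)
    (x : M)
    (hint : Integrable (fun ω => ojaKernel x (Xs 0 ω) (Xs 1 ω) (Xs 2 ω)) μ)
    (hzero : ∫ ω, ojaKernel x (Xs 0 ω) (Xs 1 ω) (Xs 2 ω) ∂μ = 0) :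
    ∀ᵐ ω ∂μ, MBetween (Xs 0 ω) x (Xs 1 ω) ∨ MBetween (Xs 1 ω) x (Xs 2 ω) ∨
      MBetween (Xs 2 ω) x (Xs 0 ω) :=
  max_depth_implies_betweenness_as_general μ Xs x hint hzero
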